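/- One-step inequality for convex quasi-self-concordant objectives: let f : E → ℝ be convex, three times continuously differentiable, and quasi-self-concordant with parameter M ≥ 0. Let ψ : E → ℝ be convex, x ∈ E, s a subgradient of ψ at x, H a symmetric positive semidefinite linear map with ‖H − ∇²f(x)‖ ≤ β for some β ≥ 0, and α ≥ M‖∇f(x) + s‖ + β with α > 0. If x⁺ is a composite step from x with parameters (H, α), then ⟨F'(x⁺), x − x⁺⟩ ≥ ‖F'(x⁺)‖²/(2α), where F'(x⁺) := ∇f(x⁺) − ∇f(x) − (H + αI)(x⁺ − x). -/

import Mathlib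

open scoped RealInnerProductSpace
open Real Set

def IsSymmPSD {n : ℕ} (H : EuclideanSpace ℝ (Fin n) →L[ℝ] EuclideanSpace ℝ (Fin n)) : Prop :=
  (∀ u v, ⟪H u, v⟫ = ⟪u, H v⟫) ∧ ∀ u, 0 ≤ ⟪H u, u⟫

def IsSubgradAt {n : ℕ} (ψ : EuclideanSpace ℝ (Fin n) → ℝ)
    (s x : EuclideanSpace ℝ (Fin n)) : Prop :=
  ∀ y, ψ x + ⟪s, y - x⟫ ≤ ψ y

def CompositeStep {n : ℕ} (g : EuclideanSpace ℝ (Fin n))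
    (H : EuclideanSpace ℝ (Fin n) →L[ℝ] EuclideanSpace ℝ (Fin n)) (α : ℝ)
    (ψ : EuclideanSpace ℝ (Fin n) → ℝ) (x xp : EuclideanSpace ℝ (Fin n)) : Prop :=
  ∀ y, ψ xp ≤ ⟪g + (H (xp - x) + α • (xp - x)), y - xp⟫ + ψ y

noncomputable def hess {n : ℕ} (f : EuclideanSpace ℝ (Fin n) → ℝ)
    (x : EuclideanSpace ℝ (Fin n)) :
    EuclideanSpace ℝ (Fin n) →L[ℝ] EuclideanSpace ℝ (Fin n) :=
  fderiv ℝ (gradient f) x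

/-! With `r = x⁺ - x`, testing the composite step at `y = x` against the subgradient inequality
at `x⁺` gives `⟪H r, r⟫ + α‖r‖² ≤ ‖∇f(x) + s‖‖r‖`; hence `α‖r‖ ≤ ‖∇f(x) + s‖` and `M‖r‖ ≤ 1`.
Along the segment from `x` to `x⁺`, quasi-self-concordance gives `φ' ≤ M‖r‖φ ≤ φ` for
`φ(t) = ∇²f(x + t r)[r, r]`, so `φ(t) ≤ eᵗφ(0) ≤ (1 + 2t)φ(0)` by Grönwall, and a second-order
Taylor expansion then bounds `Δ = ∇f(x⁺) - ∇f(x) - ∇²f(x) r` by `‖Δ‖ ≤ M⟪∇²f(x) r, r⟫`, which is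
at most `(α - β)‖r‖`. So `D = ∇f(x⁺) - ∇f(x) - H r` satisfies `‖D‖ ≤ α‖r‖`, and expanding the
square, `‖D - α r‖² ≤ 2α⟪D - α r, -r⟫` is exactly `‖D‖² ≤ α²‖r‖²`. -/

lemma exp_le_one_add_two_mul {t : ℝ} (h0 : 0 ≤ t) (h1 : t ≤ 1) : exp t ≤ 1 + 2 * t := by
  have h := convexOn_exp.2 (mem_univ 0) (mem_univ 1) (sub_nonneg.2 h1) h0 (sub_add_cancel 1 t)
  simp only [smul_eq_mul, mul_zero, mul_one, zero_add, exp_zero] at h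
  nlinarith [exp_one_lt_d9]

lemma le_mul_exp_of_hasDerivAt_le_self {φ φ' : ℝ → ℝ} (hφ : ∀ t, HasDerivAt φ (φ' t) t)
    (h : ∀ t, φ' t ≤ φ t) {t : ℝ} (ht : 0 ≤ t) : φ t ≤ φ 0 * exp t := by
  have hgronwall := le_gronwallBound_of_liminf_deriv_right_le (δ := φ 0) (K := 1) (ε := 0)
    (fun s _ => (hφ s).continuousAt.continuousWithinAt)
    (fun s _ _ hr => (hφ s).hasDerivWithinAt.liminf_right_slope_le hr) le_rfl
    (fun s _ => by simpa using h s) t ⟨ht, le_rfl⟩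
  simpa [gronwallBound_ε0] using hgronwall

lemma le_on_Icc_of_hasDerivAt_le {f f' g g' : ℝ → ℝ} {a b : ℝ}
    (hf : ∀ t, HasDerivAt f (f' t) t) (hg : ∀ t, HasDerivAt g (g' t) t) (ha : f a ≤ g a)
    (h : ∀ t ∈ Ico a b, f' t ≤ g' t) : ∀ t ∈ Icc a b, f t ≤ g t :=
  image_le_of_deriv_right_le_deriv_boundary (fun t _ => (hf t).continuousAt.continuousWithinAt)
    (fun t _ => (hf t).hasDerivWithinAt) ha (fun t _ => (hg t).continuousAt.continuousWithinAt)
    (fun t _ => (hg t).hasDerivWithinAt) h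

lemma sub_sub_deriv_le_of_deriv_le_self {φ φ' χ χ' ρ : ℝ → ℝ} {K : ℝ} (hK : 0 ≤ K)
    (hφ : ∀ t, HasDerivAt φ (φ' t) t) (hφ' : ∀ t, φ' t ≤ φ t) (hφ0 : 0 ≤ φ 0)
    (hχ : ∀ t, HasDerivAt χ (χ' t) t) (hχ' : ∀ t, χ' t ≤ K * φ t)
    (hρ : ∀ t, HasDerivAt ρ (χ t) t) : ρ 1 - ρ 0 - χ 0 ≤ K * φ 0 := by
  have hφ_le : ∀ t ∈ Icc (0 : ℝ) 1, φ t ≤ φ 0 * (1 + 2 * t) := fun t ht =>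
    (le_mul_exp_of_hasDerivAt_le_self hφ hφ' ht.1).trans
      (mul_le_mul_of_nonneg_left (exp_le_one_add_two_mul ht.1 ht.2) hφ0)
  have hχ_le : ∀ t ∈ Icc (0 : ℝ) 1, χ t ≤ χ 0 + K * φ 0 * (t + t ^ 2) := by
    refine le_on_Icc_of_hasDerivAt_le (g' := fun t => K * φ 0 * (1 + 2 * t)) hχ (fun t => ?_)
      (by simp) fun t ht => ?_
    · exact ((((hasDerivAt_id' t).fun_add (hasDerivAt_pow 2 t)).const_mul (K * φ 0)).const_add
        (χ 0)).congr_deriv (by norm_num)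
    · calc χ' t ≤ K * φ t := hχ' t
        _ ≤ K * (φ 0 * (1 + 2 * t)) := by gcongr; exact hφ_le t (Ico_subset_Icc_self ht)
        _ = K * φ 0 * (1 + 2 * t) := by ring
  -- `∫₀¹ (t + t²) dt = 5/6 ≤ 1` is the slack left by the crude bound `eᵗ ≤ 1 + 2t`.
  have hρ_le : ρ 1 ≤ ρ 0 + χ 0 + K * φ 0 * (1 / 2 + 1 / 3) := by
    have h := le_on_Icc_of_hasDerivAt_le (g' := fun t => χ 0 + K * φ 0 * (t + t ^ 2)) hρ
      (g := fun t => ρ 0 + χ 0 * t + K * φ 0 * (t ^ 2 / 2 + t ^ 3 / 3)) (fun t => ?_)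
      (by simp) (fun t ht => hχ_le t (Ico_subset_Icc_self ht)) 1 ⟨zero_le_one, le_rfl⟩
    · exact h.trans_eq (by ring)
    · exact ((((hasDerivAt_id' t).const_mul (χ 0)).const_add (ρ 0)).fun_add
        ((((hasDerivAt_pow 2 t).div_const 2).fun_add ((hasDerivAt_pow 3 t).div_const 3)).const_mul
          (K * φ 0))).congr_deriv (by norm_num)
  nlinarith [mul_nonneg hK hφ0]

section NormedSpace

variable {E F : Type*} [NormedAddCommGroup E] [NormedSpace ℝ E] [NormedAddCommGroup F]
  [NormedSpace ℝ F]

lemma hasDerivAt_iteratedFDeriv_line {f : E → F} {k : ℕ} {x r : E} {t : ℝ} (m : Fin k → E)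
    (hf : DifferentiableAt ℝ (iteratedFDeriv ℝ k f) (x + t • r)) :
    HasDerivAt (fun t : ℝ => iteratedFDeriv ℝ k f (x + t • r) m)
      (iteratedFDeriv ℝ (k + 1) f (x + t • r) (Fin.cons r m)) t := by
  have hline : HasDerivAt (fun t : ℝ => x + t • r) r t :=
    ((hasDerivAt_id' t).smul_const r).const_add x |>.congr_deriv (one_smul ℝ r)
  rw [iteratedFDeriv_succ_apply_left, Fin.cons_zero, Fin.tail_cons]
  exact ((ContinuousMultilinearMap.apply ℝ (fun _ => E) F m).hasFDerivAt.comp _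
    hf.hasFDerivAt).comp_hasDerivAt t hline

lemma ConvexOn.iteratedFDeriv_two_nonneg {f : E → ℝ} (hconv : ConvexOn ℝ univ f)
    (hf : ContDiff ℝ 2 f) (y u : E) : 0 ≤ iteratedFDeriv ℝ 2 f y ![u, u] := by
  have hline : ConvexOn ℝ univ (fun t : ℝ => f (y + t • u)) := by
    simpa [Function.comp_def] using
      (hconv.translate_right y).comp_linearMap (LinearMap.toSpanSingleton ℝ E u)
  have hd₀ (t : ℝ) : HasDerivAt (fun t : ℝ => f (y + t • u))
      (iteratedFDeriv ℝ 1 f (y + t • u) ![u]) t := by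
    simpa using hasDerivAt_iteratedFDeriv_line ![]
      ((hf.differentiable_iteratedFDeriv (by norm_num)) (y + t • u))
  have hd₁ : HasDerivAt (fun t : ℝ => iteratedFDeriv ℝ 1 f (y + t • u) ![u])
      (iteratedFDeriv ℝ 2 f (y + (0 : ℝ) • u) ![u, u]) 0 :=
    hasDerivAt_iteratedFDeriv_line ![u]
      ((hf.differentiable_iteratedFDeriv (by norm_num)) (y + (0 : ℝ) • u))
  have hmono : Monotone fun t : ℝ => iteratedFDeriv ℝ 1 f (y + t • u) ![u] := fun a b hab => by
    simpa only [(hd₀ a).deriv, (hd₀ b).deriv] using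
      hline.monotoneOn_deriv (fun t _ => (hd₀ t).differentiableAt) trivial trivial hab
  simpa using hd₁.nonneg_of_monotone hmono

end NormedSpace

section InnerProductSpace

variable {G : Type*} [NormedAddCommGroup G] [InnerProductSpace ℝ G]

lemma inner_le_inner_add_of_norm_sub_le {A B : G →L[ℝ] G} {β : ℝ} (h : ‖A - B‖ ≤ β) (r : G) :
    ⟪B r, r⟫ ≤ ⟪A r, r⟫ + β * ‖r‖ ^ 2 := by
  have h' : -⟪(A - B) r, r⟫ ≤ β * ‖r‖ ^ 2 := calc
    -⟪(A - B) r, r⟫ ≤ ‖(A - B) r‖ * ‖r‖ :=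
      (neg_le_abs _).trans (abs_real_inner_le_norm _ _)
    _ ≤ ‖A - B‖ * ‖r‖ * ‖r‖ := by gcongr; exact (A - B).le_opNorm r
    _ ≤ β * ‖r‖ ^ 2 := by rw [mul_assoc, ← sq]; gcongr
  rw [sub_apply, inner_sub_left] at h'
  linarith

lemma norm_sub_smul_sq_div_le_inner {D r : G} {α : ℝ} (hα : 0 < α) (hD : ‖D‖ ≤ α * ‖r‖) :
    ‖D - α • r‖ ^ 2 / (2 * α) ≤ ⟪D - α • r, -r⟫ := by
  have hD2 : ‖D‖ ^ 2 ≤ α ^ 2 * ‖r‖ ^ 2 := by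
    rw [← mul_pow]; exact pow_le_pow_left₀ (norm_nonneg D) hD 2
  rw [div_le_iff₀ (by positivity), norm_sub_sq_real, inner_neg_right, inner_sub_left,
    real_inner_smul_right, real_inner_smul_left, real_inner_self_eq_norm_sq, norm_smul,
    Real.norm_eq_abs, abs_of_pos hα]
  nlinarith

variable [CompleteSpace G]

lemma inner_fderiv_gradient_apply {f : G → ℝ} {y : G}
    (hf : DifferentiableAt ℝ (fderiv ℝ f) y) (u v : G) :
    ⟪fderiv ℝ (gradient f) y u, v⟫ = fderiv ℝ (fderiv ℝ f) y u v := by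
  let toPrimal : StrongDual ℝ G →L[ℝ] G :=
    (InnerProductSpace.toDual ℝ G).symm.toContinuousLinearEquiv.toContinuousLinearMap
  have hgrad : HasFDerivAt (gradient f) (toPrimal.comp (fderiv ℝ (fderiv ℝ f) y)) y :=
    toPrimal.hasFDerivAt.comp y hf.hasFDerivAt
  rw [hgrad.fderiv]
  exact InnerProductSpace.toDual_symm_apply

end InnerProductSpace

section EuclideanSpace

variable {n : ℕ}
local notation "ℝⁿ" => EuclideanSpace ℝ (Fin n)

lemma inner_hess_apply {f : ℝⁿ → ℝ} (hf : ContDiff ℝ 2 f) (y u v : ℝⁿ) :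
    ⟪hess f y u, v⟫ = iteratedFDeriv ℝ 2 f y ![u, v] := by
  rw [iteratedFDeriv_two_apply]
  exact inner_fderiv_gradient_apply
    ((hf.fderiv_right (m := 1) (by norm_num)).differentiable (by norm_num) y) u v

theorem norm_gradient_sub_sub_hess_le {f : ℝⁿ → ℝ} (hf : ContDiff ℝ 3 f)
    (hconv : ConvexOn ℝ univ f) {M : ℝ} (hM : 0 ≤ M)
    (hqsc : ∀ x u v : ℝⁿ, iteratedFDeriv ℝ 3 f x ![u, u, v] ≤ M * ⟪hess f x u, u⟫ * ‖v‖)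
    (x r : ℝⁿ) (hr : M * ‖r‖ ≤ 1) :
    ‖gradient f (x + r) - gradient f x - hess f x r‖ ≤ M * ⟪hess f x r, r⟫ := by
  set Δ := gradient f (x + r) - gradient f x - hess f x r
  have hf2 : ContDiff ℝ 2 f := hf.of_le (by norm_num)
  have hd {k : ℕ} (hk : k < 3) (t : ℝ) :
      DifferentiableAt ℝ (iteratedFDeriv ℝ k f) (x + t • r) :=
    hf.differentiable_iteratedFDeriv (by exact_mod_cast hk) _
  have hφ (t : ℝ) : 0 ≤ iteratedFDeriv ℝ 2 f (x + t • r) ![r, r] :=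
    hconv.iteratedFDeriv_two_nonneg hf2 _ r
  have hqsc' (t : ℝ) (v : ℝⁿ) : iteratedFDeriv ℝ 3 f (x + t • r) ![r, r, v]
      ≤ M * ‖v‖ * iteratedFDeriv ℝ 2 f (x + t • r) ![r, r] := by
    have h := hqsc (x + t • r) r v
    rw [inner_hess_apply hf2] at h
    linarith
  -- Expand `ρ(t) = ⟪∇f(x + t r), Δ⟫` to second order: then `ρ(1) - ρ(0) - ρ'(0) = ‖Δ‖²`.
  have htaylor := sub_sub_deriv_le_of_deriv_le_self (mul_nonneg hM (norm_nonneg Δ))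
    (fun t => hasDerivAt_iteratedFDeriv_line ![r, r] (hd (by norm_num) t))
    (fun t => (hqsc' t r).trans (mul_le_of_le_one_left (hφ t) hr)) (hφ 0)
    (fun t => hasDerivAt_iteratedFDeriv_line ![r, Δ] (hd (by norm_num) t)) (fun t => hqsc' t Δ)
    (fun t => hasDerivAt_iteratedFDeriv_line ![Δ] (hd (by norm_num) t))
  have hΔ : ‖Δ‖ ^ 2 ≤ ‖Δ‖ * (M * ⟪hess f x r, r⟫) := by
    convert htaylor using 1
    · rw [← real_inner_self_eq_norm_sq]
      simp only [one_smul, zero_smul, add_zero, iteratedFDeriv_one_apply, Matrix.cons_val_zero,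
        ← inner_hess_apply hf2, ← inner_gradient_left, ← inner_sub_left]
      rfl
    · rw [inner_hess_apply hf2]
      simp only [Nat.succ_eq_add_one, Nat.reduceAdd, zero_smul, add_zero]
      ring
  have hφ0 : 0 ≤ M * ⟪hess f x r, r⟫ := by
    rw [inner_hess_apply hf2]; simpa using mul_nonneg hM (hφ 0)
  nlinarith [norm_nonneg Δ]

lemma CompositeStep.inner_add_mul_norm_sq_le {g s x xp : ℝⁿ} {H : ℝⁿ →L[ℝ] ℝⁿ} {α : ℝ}
    {ψ : ℝⁿ → ℝ} (hstep : CompositeStep g H α ψ x xp) (hs : IsSubgradAt ψ s x) :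
    ⟪H (xp - x), xp - x⟫ + α * ‖xp - x‖ ^ 2 ≤ ‖g + s‖ * ‖xp - x‖ := by
  have hopt := hstep x
  have hsub := hs xp
  have hcs : -⟪g + s, xp - x⟫ ≤ ‖g + s‖ * ‖xp - x‖ :=
    (neg_le_abs _).trans (abs_real_inner_le_norm _ _)
  rw [← neg_sub xp x, inner_neg_right, inner_add_left, inner_add_left, real_inner_smul_left,
    real_inner_self_eq_norm_sq] at hopt
  rw [inner_add_left] at hcs
  linarith

lemma CompositeStep.mul_norm_sub_le {g s x xp : ℝⁿ} {H : ℝⁿ →L[ℝ] ℝⁿ} {α : ℝ}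
    {ψ : ℝⁿ → ℝ} (hstep : CompositeStep g H α ψ x xp) (hs : IsSubgradAt ψ s x)
    (hH : IsSymmPSD H) : α * ‖xp - x‖ ≤ ‖g + s‖ := by
  have h := hstep.inner_add_mul_norm_sq_le hs
  rcases (norm_nonneg (xp - x)).eq_or_lt with hr | hr
  · rw [← hr, mul_zero]
    exact norm_nonneg _
  · nlinarith [hH.2 (xp - x)]

end EuclideanSpace

theorem qsc_one_step_inequality_general {n : ℕ}
    (f : EuclideanSpace ℝ (Fin n) → ℝ) (hf : ContDiff ℝ 3 f)
    (hconv : ConvexOn ℝ Set.univ f)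
    (M : ℝ) (hM : 0 ≤ M)
    (hqsc : ∀ x u v : EuclideanSpace ℝ (Fin n),
      iteratedFDeriv ℝ 3 f x ![u, u, v] ≤ M * ⟪hess f x u, u⟫ * ‖v‖)
    (ψ : EuclideanSpace ℝ (Fin n) → ℝ)
    (x xp s : EuclideanSpace ℝ (Fin n)) (hs : IsSubgradAt ψ s x)
    (H : EuclideanSpace ℝ (Fin n) →L[ℝ] EuclideanSpace ℝ (Fin n)) (hH : IsSymmPSD H)
    (β : ℝ) (hHerr : ‖H - hess f x‖ ≤ β)
    (α : ℝ) (hαpos : 0 < α)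
    (hα : M * ‖gradient f x + s‖ + β ≤ α)
    (hstep : CompositeStep (gradient f x) H α ψ x xp) :
    ‖gradient f xp - gradient f x - (H (xp - x) + α • (xp - x))‖ ^ 2 / (2 * α)
      ≤ ⟪gradient f xp - gradient f x - (H (xp - x) + α • (xp - x)), x - xp⟫ := by
  set r := xp - x
  set G := ‖gradient f x + s‖
  have hβ : 0 ≤ β := (norm_nonneg _).trans hHerr
  have hdecrease : ⟪H r, r⟫ + α * ‖r‖ ^ 2 ≤ G * ‖r‖ := hstep.inner_add_mul_norm_sq_le hs
  have hαr : α * ‖r‖ ≤ G := hstep.mul_norm_sub_le hs hH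
  have hMr : M * ‖r‖ ≤ 1 := by
    refine le_of_mul_le_mul_right ?_ hαpos
    nlinarith [mul_le_mul_of_nonneg_left hαr hM]
  have hΔ : ‖gradient f xp - gradient f x - hess f x r‖ ≤ M * ⟪hess f x r, r⟫ := by
    simpa [r] using norm_gradient_sub_sub_hess_le hf hconv hM hqsc x r hMr
  have hhess := inner_le_inner_add_of_norm_sub_le hHerr r
  have hD : ‖gradient f xp - gradient f x - H r‖ ≤ α * ‖r‖ := calc
    ‖gradient f xp - gradient f x - H r‖
        = ‖(gradient f xp - gradient f x - hess f x r) + (hess f x - H) r‖ := by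
      rw [sub_apply]; abel_nf
    _ ≤ M * ⟪hess f x r, r⟫ + β * ‖r‖ := by
      refine norm_add_le_of_le hΔ (((hess f x - H).le_opNorm r).trans ?_)
      rw [norm_sub_rev]
      gcongr
    _ ≤ M * (G * ‖r‖ - (α - β) * ‖r‖ ^ 2) + β * ‖r‖ := by
      gcongr
      linarith
    _ ≤ (M * G + β) * ‖r‖ := by
      have hαβ : 0 ≤ α - β := by linarith [mul_nonneg hM (norm_nonneg (gradient f x + s))]
      nlinarith [mul_nonneg (mul_nonneg hM hαβ) (sq_nonneg ‖r‖)]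
    _ ≤ α * ‖r‖ := by gcongr
  rw [sub_add_eq_sub_sub, ← neg_sub xp x]
  exact norm_sub_smul_sq_div_le_inner hαpos hD

/-- One-step inequality for convex quasi-self-concordant objectives:
if `α ≥ M‖∇f(x) + s‖ + β` then `⟨F'(x⁺), x − x⁺⟩ ≥ ‖F'(x⁺)‖²/(2α)`, where
`F'(x⁺) = ∇f(x⁺) − ∇f(x) − (H + αI)(x⁺ − x)`. -/
theorem qsc_one_step_inequality {n : ℕ}
    (f : EuclideanSpace ℝ (Fin n) → ℝ) (hf : ContDiff ℝ 3 f)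
    (hconv : ConvexOn ℝ Set.univ f)
    (M : ℝ) (hM : 0 ≤ M)
    (hqsc : ∀ x u v : EuclideanSpace ℝ (Fin n),
      iteratedFDeriv ℝ 3 f x ![u, u, v] ≤ M * ⟪hess f x u, u⟫ * ‖v‖)
    (ψ : EuclideanSpace ℝ (Fin n) → ℝ) (hψ : ConvexOn ℝ Set.univ ψ)
    (x xp s : EuclideanSpace ℝ (Fin n)) (hs : IsSubgradAt ψ s x)
    (H : EuclideanSpace ℝ (Fin n) →L[ℝ] EuclideanSpace ℝ (Fin n)) (hH : IsSymmPSD H)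
    (β : ℝ) (hβ : 0 ≤ β) (hHerr : ‖H - hess f x‖ ≤ β)
    (α : ℝ) (hαpos : 0 < α)
    (hα : M * ‖gradient f x + s‖ + β ≤ α)
    (hstep : CompositeStep (gradient f x) H α ψ x xp) :
    ‖gradient f xp - gradient f x - (H (xp - x) + α • (xp - x))‖ ^ 2 / (2 * α)
      ≤ ⟪gradient f xp - gradient f x - (H (xp - x) + α • (xp - x)), x - xp⟫ :=
  qsc_one_step_inequality_general f hf hconv M hM hqsc ψ x xp s hs H hH β hHerr α hαpos hα hstep
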